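/- Entropy monotonicity of the discrete-gradient-dependent integrator: suppose V^n, V^{n+1} ∈ (ℝ³)^N satisfy the DGDI update with entropy function S. Then the entropy is non-decreasing over the step: S(V^{n+1}) ≥ S(V^n). -/

import Mathlib

open Matrix
open scoped RealInnerProductSpace

/-- The Landau collision kernel `Q(ξ) = (1/‖ξ‖)(I − ξξᵀ/‖ξ‖²)` on ℝ³. -/
noncomputable def landauQ (ξ : EuclideanSpace ℝ (Fin 3)) : Matrix (Fin 3) (Fin 3) ℝ :=
  ‖ξ‖⁻¹ • ((1 : Matrix (Fin 3) (Fin 3) ℝ) - (‖ξ‖ ^ 2)⁻¹ • Matrix.vecMulVec ξ ξ)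

/-- Reinterpret a plain vector in `ℝ³` as a point of Euclidean space. -/
noncomputable def toE3 (v : Fin 3 → ℝ) : EuclideanSpace ℝ (Fin 3) :=
  (WithLp.equiv 2 (Fin 3 → ℝ)).symm v

/-- Partial gradient of `F : (ℝ³)^N → ℝ` with respect to the velocity `v_p`. -/
noncomputable def gradVp {N : ℕ} (F : (Fin N → EuclideanSpace ℝ (Fin 3)) → ℝ)
    (V : Fin N → EuclideanSpace ℝ (Fin 3)) (p : Fin N) : EuclideanSpace ℝ (Fin 3) :=
  gradient (fun ξ => F (Function.update V p ξ)) (V p)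

/-- The `p`-th `ℝ³` block of the average discrete gradient
`∇̄F(Vⁿ,Vⁿ⁺¹) = ∫₀¹ ∇F((1−t)Vⁿ + t Vⁿ⁺¹) dt`. -/
noncomputable def bGrad {N : ℕ} (F : (Fin N → EuclideanSpace ℝ (Fin 3)) → ℝ)
    (V0 V1 : Fin N → EuclideanSpace ℝ (Fin 3)) (p : Fin N) : EuclideanSpace ℝ (Fin 3) :=
  ∫ t in (0:ℝ)..1, gradVp F ((1 - t) • V0 + t • V1) p

/-- `Γ̄(F,p,p̄) = (1/(m w_p)) (∇̄F)_p − (1/(m w_p̄)) (∇̄F)_p̄`. -/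
noncomputable def bGamma {N : ℕ} (m : ℝ) (w : Fin N → ℝ)
    (F : (Fin N → EuclideanSpace ℝ (Fin 3)) → ℝ)
    (V0 V1 : Fin N → EuclideanSpace ℝ (Fin 3)) (p q : Fin N) : EuclideanSpace ℝ (Fin 3) :=
  (1 / (m * w p)) • bGrad F V0 V1 p - (1 / (m * w q)) • bGrad F V0 V1 q

/-- The kinetic energy `K(V) = ½ Σ_p m w_p ‖v_p‖²`. -/
noncomputable def kinE {N : ℕ} (m : ℝ) (w : Fin N → ℝ)
    (V : Fin N → EuclideanSpace ℝ (Fin 3)) : ℝ :=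
  (1 / 2) * ∑ p, m * w p * ‖V p‖ ^ 2

/-- The discrete-gradient-dependent integrator (DGDI) update:
`v_pⁿ⁺¹ = v_pⁿ + Δt (ν/m) Σ_p̄ w_p̄ 𝟙(p,p̄) Q(Γ̄(K,p,p̄)) Γ̄(S,p,p̄)` for every `p`. -/
def DGDIUpdate {N : ℕ} (m ν Δt : ℝ) (w : Fin N → ℝ) (ind : Fin N → Fin N → ℝ)
    (S : (Fin N → EuclideanSpace ℝ (Fin 3)) → ℝ)
    (V0 V1 : Fin N → EuclideanSpace ℝ (Fin 3)) : Prop :=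
  ∀ p, V1 p = V0 p + (Δt * (ν / m)) •
    ∑ q, (w q * ind p q) •
      toE3 ((landauQ (bGamma m w (kinE m w) V0 V1 p q)).mulVec (bGamma m w S V0 V1 p q))

/-! ### Auxiliary lemmas -/

section Aux

local notation "E3" => EuclideanSpace ℝ (Fin 3)

lemma inner_toE3 (x : E3) (v : Fin 3 → ℝ) :
    ⟪x, toE3 v⟫ = ∑ i, x i * v i := by
  simp [toE3, PiLp.inner_apply, RCLike.inner_apply, mul_comm]

/-- The quadratic/bilinear form of the Landau kernel, in closed form. -/
lemma landau_inner (ξ x y : E3) :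
    ⟪x, toE3 ((landauQ ξ).mulVec y)⟫
      = ‖ξ‖⁻¹ * (⟪x, y⟫ - (‖ξ‖ ^ 2)⁻¹ * (⟪ξ, x⟫ * ⟪ξ, y⟫)) := by
  simp only [inner_toE3, landauQ, PiLp.inner_apply, RCLike.inner_apply, starRingEnd_apply,
    star_trivial, Matrix.mulVec, dotProduct, Matrix.smul_apply, Matrix.sub_apply,
    Matrix.one_apply, Matrix.vecMulVec_apply, Fin.sum_univ_three, toE3,
    WithLp.equiv_symm_apply, PiLp.toLp_apply]
  norm_num [Fin.ext_iff]
  ring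

/-- Positivity of the Landau-kernel quadratic form. -/
lemma landau_psd (ξ y : E3) :
    0 ≤ ‖ξ‖⁻¹ * (⟪y, y⟫ - (‖ξ‖ ^ 2)⁻¹ * (⟪ξ, y⟫ * ⟪ξ, y⟫)) := by
  rcases eq_or_ne ξ 0 with h | h
  · simp [h]
  · have hn : (0:ℝ) < ‖ξ‖ := norm_pos_iff.mpr h
    have hcs : ⟪ξ, y⟫ * ⟪ξ, y⟫ ≤ ⟪ξ, ξ⟫ * ⟪y, y⟫ := real_inner_mul_inner_self_le ξ y
    have hself : ⟪ξ, ξ⟫ = ‖ξ‖ ^ 2 := real_inner_self_eq_norm_sq ξ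
    have h2 : (‖ξ‖ ^ 2)⁻¹ * (⟪ξ, y⟫ * ⟪ξ, y⟫) ≤ ⟪y, y⟫ := by
      rw [inv_mul_le_iff₀ (by positivity)]
      calc ⟪ξ, y⟫ * ⟪ξ, y⟫ ≤ ⟪ξ, ξ⟫ * ⟪y, y⟫ := hcs
        _ = ‖ξ‖ ^ 2 * ⟪y, y⟫ := by rw [hself]
    have := sub_nonneg.mpr h2
    positivity

/-- Swapping the two particles negates `Γ̄`. -/
lemma bGamma_swap {N : ℕ} (m : ℝ) (w : Fin N → ℝ)
    (F : (Fin N → E3) → ℝ) (V0 V1 : Fin N → E3) (p q : Fin N) :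
    bGamma m w F V0 V1 q p = - bGamma m w F V0 V1 p q := (neg_sub _ _).symm

variable {N : ℕ} {S : (Fin N → E3) → ℝ}

/-- The insertion of the `p`-th coordinate, as a continuous linear map. -/
noncomputable def insCLM (N : ℕ) (p : Fin N) : E3 →L[ℝ] (Fin N → E3) :=
  ContinuousLinearMap.pi (Pi.single p (ContinuousLinearMap.id ℝ E3))

lemma insCLM_apply {p : Fin N} (h : E3) : insCLM N p h = Pi.single p h := by
  ext j i
  by_cases hj : j = p
  · subst hj; simp [insCLM]
  · simp [insCLM, Pi.single_apply, hj]

lemma gradVp_eq (hS : ContDiff ℝ 1 S) (V : Fin N → E3) (p : Fin N) :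
    gradVp S V p
      = (InnerProductSpace.toDual ℝ E3).symm ((fderiv ℝ S V).comp (insCLM N p)) := by
  have hupd : HasFDerivAt (fun ξ : E3 => S (Function.update V p ξ))
      ((fderiv ℝ S V).comp (insCLM N p)) (V p) := by
    have h1 : HasFDerivAt S (fderiv ℝ S V) (Function.update V p (V p)) := by
      rw [Function.update_eq_self]
      exact (hS.differentiable one_ne_zero V).hasFDerivAt
    exact h1.comp (V p) (hasFDerivAt_update V (V p))
  rw [gradVp, gradient, hupd.fderiv]

lemma inner_gradVp (hS : ContDiff ℝ 1 S) (V : Fin N → E3) (p : Fin N) (h : E3) :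
    ⟪gradVp S V p, h⟫ = fderiv ℝ S V (Pi.single p h) := by
  rw [gradVp_eq hS, InnerProductSpace.toDual_symm_apply]
  simp [insCLM_apply]

lemma continuous_gradVp (hS : ContDiff ℝ 1 S) (p : Fin N) :
    Continuous fun V => gradVp S V p := by
  have : Continuous fun V : Fin N → E3 => (fderiv ℝ S V).comp (insCLM N p) :=
    (hS.continuous_fderiv one_ne_zero).clm_comp continuous_const
  simpa only [gradVp_eq hS, Function.comp_def] using
    (InnerProductSpace.toDual ℝ E3).symm.continuous.comp this

lemma fderiv_eq_sum_inner (hS : ContDiff ℝ 1 S) (V d : Fin N → E3) :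
    fderiv ℝ S V d = ∑ p, ⟪gradVp S V p, d p⟫ := by
  conv_lhs => rw [← Finset.univ_sum_single d, map_sum]
  exact Finset.sum_congr rfl fun p _ => (inner_gradVp hS V p (d p)).symm

/-- Fundamental theorem of calculus for the average discrete gradient. -/
lemma entropy_diff (hS : ContDiff ℝ 1 S) (V0 V1 : Fin N → E3) :
    S V1 - S V0 = ∑ p, ⟪bGrad S V0 V1 p, V1 p - V0 p⟫ := by
  set path : ℝ → (Fin N → E3) := fun t => (1 - t) • V0 + t • V1 with hpathdef
  have hpathc : Continuous path := by fun_prop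
  have hpath0 : path 0 = V0 := by simp [hpathdef]
  have hpath1 : path 1 = V1 := by simp [hpathdef]
  have hderiv : ∀ t : ℝ, HasDerivAt path (V1 - V0) t := by
    intro t
    have h1 : HasDerivAt (fun t : ℝ => (1 - t) • V0) ((-1 : ℝ) • V0) t :=
      (((hasDerivAt_id t).const_sub 1)).smul_const V0
    have h2 : HasDerivAt (fun t : ℝ => t • V1) ((1 : ℝ) • V1) t :=
      (hasDerivAt_id t).smul_const V1
    have := h1.add h2
    have e : V1 - V0 = (-1:ℝ) • V0 + (1:ℝ) • V1 := by simp [sub_eq_add_neg, add_comm]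
    rw [e]; exact this
  have hScont := hS.continuous_fderiv one_ne_zero
  have hgcont : ∀ p, Continuous fun t => gradVp S (path t) p := fun p =>
    (continuous_gradVp hS p).comp hpathc
  have hftc : S (path 1) - S (path 0)
      = ∫ t in (0:ℝ)..1, fderiv ℝ S (path t) (V1 - V0) := by
    refine (intervalIntegral.integral_eq_sub_of_hasDerivAt
      (f := fun t => S (path t)) (f' := fun t => fderiv ℝ S (path t) (V1 - V0))
      (fun t _ => ?_) ?_).symm
    · exact ((hS.differentiable one_ne_zero (path t)).hasFDerivAt).comp_hasDerivAt t (hderiv t)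
    · exact ((hScont.comp hpathc).clm_apply continuous_const).intervalIntegrable _ _
  rw [hpath0, hpath1] at hftc
  rw [hftc]
  have : ∀ t : ℝ, fderiv ℝ S (path t) (V1 - V0)
      = ∑ p, ⟪V1 p - V0 p, gradVp S (path t) p⟫ := by
    intro t
    rw [fderiv_eq_sum_inner hS]
    exact Finset.sum_congr rfl fun p _ => by
      rw [real_inner_comm]; rfl
  simp only [this]
  rw [intervalIntegral.integral_finset_sum (fun p _ =>
    ((continuous_const.inner (hgcont p)).intervalIntegrable _ _))]
  refine Finset.sum_congr rfl fun p _ => ?_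
  rw [real_inner_comm, bGrad]
  have h2 := (ContinuousLinearMap.intervalIntegral_comp_comm (μ := MeasureTheory.volume)
    (innerSL ℝ (V1 p - V0 p)) ((hgcont p).intervalIntegrable 0 1)).symm
  simp only [innerSL_apply_apply] at h2
  show (∫ x in (0:ℝ)..1, ⟪V1 p - V0 p, gradVp S (path x) p⟫)
      = ⟪V1 p - V0 p, ∫ t in (0:ℝ)..1, gradVp S (path t) p⟫
  exact h2.symm

end Aux

/-- Entropy monotonicity of the discrete-gradient-dependent integrator: under the
DGDI update with entropy function `S`, the entropy is non-decreasing: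
`S(Vⁿ⁺¹) ≥ S(Vⁿ)`. -/
theorem DGDI_entropy_monotonicity
(N : ℕ) (hN : 1 ≤ N) (m : ℝ) (hm : 0 < m)
    (w : Fin N → ℝ) (hw : ∀ p, 0 < w p) (ν : ℝ) (hν : 0 ≤ ν) (Δt : ℝ) (hΔt : 0 ≤ Δt)
    (ind : Fin N → Fin N → ℝ) (hind01 : ∀ p q, ind p q = 0 ∨ ind p q = 1)
    (hindsymm : ∀ p q, ind p q = ind q p) (hinddiag : ∀ p, ind p p = 0)
    (S : (Fin N → EuclideanSpace ℝ (Fin 3)) → ℝ) (hS : ContDiff ℝ 1 S)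
    (V0 V1 : Fin N → EuclideanSpace ℝ (Fin 3))
    (hK : ∀ p q, ind p q = 1 → bGamma m w (kinE m w) V0 V1 p q ≠ 0)
    (hupd : DGDIUpdate m ν Δt w ind S V0 V1) :
    S V0 ≤ S V1 := by
  classical
  set f : Fin N → Fin N → ℝ := fun p q =>
    (w q * ind p q) * ⟪bGrad S V0 V1 p,
      toE3 ((landauQ (bGamma m w (kinE m w) V0 V1 p q)).mulVec (bGamma m w S V0 V1 p q))⟫
    with hf
  -- Step 1: entropy difference as a weighted double sum
  have hdiff : S V1 - S V0 = (Δt * (ν / m)) * ∑ p, ∑ q, f p q := by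
    rw [entropy_diff hS V0 V1]
    have hstep : ∀ p, V1 p - V0 p = (Δt * (ν / m)) •
        ∑ q, (w q * ind p q) •
          toE3 ((landauQ (bGamma m w (kinE m w) V0 V1 p q)).mulVec
            (bGamma m w S V0 V1 p q)) := by
      intro p
      rw [hupd p]
      exact add_sub_cancel_left _ _
    rw [Finset.mul_sum]
    refine Finset.sum_congr rfl fun p _ => ?_
    rw [hstep p, real_inner_smul_right, inner_sum]
    refine congrArg (fun s => Δt * (ν / m) * s) (Finset.sum_congr rfl fun q _ => ?_)
    rw [real_inner_smul_right]
  -- Step 2: each symmetrized pair contribution is nonnegative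
  have key : ∀ p q, 0 ≤ f p q + f q p := by
    intro p q
    set ap := bGrad S V0 V1 p with hap
    set aq := bGrad S V0 V1 q with haq
    set G := bGamma m w S V0 V1 p q with hG
    set X := bGamma m w (kinE m w) V0 V1 p q with hX
    rcases hind01 p q with h0 | h1
    · have h0' : ind q p = 0 := by rw [← hindsymm]; exact h0
      simp [hf, h0, h0']
    · have h1' : ind q p = 1 := by rw [← hindsymm]; exact h1
      have hswapX : bGamma m w (kinE m w) V0 V1 q p = - X := by
        rw [hX]; exact bGamma_swap m w _ V0 V1 p q
      have hswapG : bGamma m w S V0 V1 q p = - G := by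
        rw [hG]; exact bGamma_swap m w _ V0 V1 p q
      have hfpq : f p q = w q * (‖X‖⁻¹ *
          (⟪ap, G⟫ - (‖X‖ ^ 2)⁻¹ * (⟪X, ap⟫ * ⟪X, G⟫))) := by
        simp only [hf, ← hap, ← hG, ← hX]
        rw [landau_inner, h1]; ring
      have hfqp : f q p = w p * (‖X‖⁻¹ *
          (-⟪aq, G⟫ + (‖X‖ ^ 2)⁻¹ * (⟪X, aq⟫ * ⟪X, G⟫))) := by
        simp only [hf, ← haq, hswapX, hswapG]
        rw [landau_inner, h1']
        simp only [norm_neg, inner_neg_left, inner_neg_right, neg_neg]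
        ring
      -- `w q • ap - w p • aq = (m w_p w_q) • Γ`
      have hGdef : G = (1 / (m * w p)) • ap - (1 / (m * w q)) • aq := rfl
      have hwp := (hw p).ne'
      have hwq := (hw q).ne'
      have hm' := hm.ne'
      have c1 : (m * w p * w q) * (1 / (m * w p)) = w q := by field_simp
      have c2 : (m * w p * w q) * (1 / (m * w q)) = w p := by field_simp
      have hvec : (m * w p * w q) • G = w q • ap - w p • aq := by
        rw [hGdef, smul_sub, smul_smul, smul_smul, c1, c2]
      have k1 : w q * ⟪ap, G⟫ - w p * ⟪aq, G⟫ = (m * w p * w q) * ⟪G, G⟫ := by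
        have h := congrArg (fun v => ⟪v, G⟫) hvec
        simpa only [inner_sub_left, real_inner_smul_left] using h.symm
      have k2 : w q * ⟪X, ap⟫ - w p * ⟪X, aq⟫ = (m * w p * w q) * ⟪X, G⟫ := by
        have h := congrArg (fun v => ⟪X, v⟫) hvec
        simpa only [inner_sub_right, real_inner_smul_right] using h.symm
      have hiden : f p q + f q p = (m * w p * w q) * (‖X‖⁻¹ *
          (⟪G, G⟫ - (‖X‖ ^ 2)⁻¹ * (⟪X, G⟫ * ⟪X, G⟫))) := by
        rw [hfpq, hfqp]
        linear_combination (‖X‖⁻¹) * k1 - (‖X‖⁻¹ * (‖X‖ ^ 2)⁻¹ * ⟪X, G⟫) * k2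
      rw [hiden]
      have hpos : (0:ℝ) ≤ m * w p * w q := le_of_lt (mul_pos (mul_pos hm (hw p)) (hw q))
      exact mul_nonneg hpos (landau_psd _ _)
  -- Step 3: the double sum is nonnegative by symmetrization
  have hsum : 0 ≤ ∑ p, ∑ q, f p q := by
    have hsym : ∑ p, ∑ q, f q p = ∑ p, ∑ q, f p q := Finset.sum_comm
    have h2 : (0:ℝ) ≤ ∑ p, ∑ q, (f p q + f q p) :=
      Finset.sum_nonneg fun p _ => Finset.sum_nonneg fun q _ => key p q
    have h3 : ∑ p, ∑ q, (f p q + f q p)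
        = (∑ p, ∑ q, f p q) + ∑ p, ∑ q, f q p := by
      simp [Finset.sum_add_distrib]
    rw [h3, hsym] at h2
    linarith
  have hc : (0:ℝ) ≤ Δt * (ν / m) := by positivity
  nlinarith [mul_nonneg hc hsum]
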